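/- arXiv:2603.00672 — 2 statements merged into one kernel-verified Lean document; each statement's English description precedes it below -/
import Mathlib

section
/- Let k be a field and K = k(t) the rational function field. The valuation subrings O of K with k ⊆ O and O ≠ K are exactly the following: the localizations k[t]_{(p)} of k[t] at the prime ideal generated by a monic irreducible polynomial p ∈ k[t], and the ring k[1/t]_{(1/t)} (the localization of k[1/t] at the prime ideal generated by 1/t). These rings are pairwise distinct, so places of K/k correspond bijectively to monic irreducible polynomials of k[t] together with one extra place at infinity. -/
/-- The subset of `k(t)` corresponding to the localization `k[t]_(p)` of `k[t]` at the
prime ideal generated by `p`. -/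
def finitePlaceRing (k : Type*) [Field k] (p : Polynomial k) : Set (RatFunc k) :=
  {z : RatFunc k | ∃ a b : Polynomial k, ¬ p ∣ b ∧
    z * algebraMap (Polynomial k) (RatFunc k) b = algebraMap (Polynomial k) (RatFunc k) a}

/-- The subset of `k(t)` corresponding to the localization `k[1/t]_(1/t)` of `k[1/t]` at the
prime ideal generated by `1/t`. -/
def infinitePlaceRing (k : Type*) [Field k] : Set (RatFunc k) :=
  {z : RatFunc k | ∃ a b : Polynomial k, b.coeff 0 ≠ 0 ∧
    z * Polynomial.aeval (RatFunc.X : RatFunc k)⁻¹ b = Polynomial.aeval (RatFunc.X : RatFunc k)⁻¹ a}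

/-!
A valuation subring `O ⊇ k` of `k(t)` contains `x = t` or `x = 1/t`, hence contains `k[x]`. The
polynomials `f` with `f(x)` in the maximal ideal of `O` form a prime ideal of `k[x]`, nonzero
because `k(t) = k(x)` and `O ≠ k(t)`; it is generated by a monic irreducible `p`. Then `O` is the
localization of `k[x]` at `(p)`: polynomials prime to `p` become units of `O`, and writing an
element of `O` as a reduced fraction shows that its denominator is prime to `p`. When `t ∉ O`,
`1/t` lies in the maximal ideal, so `p = t`. The rings are distinct because `1/q` lies in
`k[t]_(p)` exactly when `p ∤ q`, and `t` lies in every `k[t]_(p)` but not in `k[1/t]_(1/t)`.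
-/

open Polynomial

theorem Polynomial.eq_of_monic_of_irreducible_of_dvd {k : Type*} [CommRing k] {p q : k[X]}
    (hp : p.Monic) (hq : q.Monic) (hp' : Irreducible p) (hq' : Irreducible q) (hpq : p ∣ q) :
    p = q :=
  eq_of_monic_of_associated hp hq (hp'.associated_of_dvd hq' hpq)

theorem Polynomial.exists_monic_irreducible_span_eq {k : Type*} [Field k] (P : Ideal k[X])
    [P.IsPrime] (hP : P ≠ ⊥) :
    ∃ p : k[X], p.Monic ∧ Irreducible p ∧ P = Ideal.span {p} := by
  classical
  set g := Submodule.IsPrincipal.generator P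
  have hg : Prime g := Submodule.IsPrincipal.prime_generator_of_isPrime P hP
  refine ⟨normalize g, monic_normalize hg.ne_zero,
    (associated_normalize g).irreducible hg.irreducible, ?_⟩
  rw [Ideal.span_singleton_eq_span_singleton.mpr (associated_normalize g).symm,
    Ideal.span_singleton_generator]

section PlaceRing

variable {k K : Type*} [Field k] [Field K] [Algebra k K]

def placeRing (x : K) (p : k[X]) : Set K :=
  {z | ∃ a b : k[X], ¬ p ∣ b ∧ z * aeval x b = aeval x a}

theorem aeval_mem_placeRing (x : K) {p : k[X]} (hp : ¬IsUnit p) (f : k[X]) :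
    aeval x f ∈ placeRing x p :=
  ⟨f, 1, fun h => hp (isUnit_of_dvd_one h), by rw [map_one, mul_one]⟩

theorem algebraMap_mem_placeRing (x : K) {p : k[X]} (hp : ¬IsUnit p) (c : k) :
    algebraMap k K c ∈ placeRing x p := by
  simpa using aeval_mem_placeRing x hp (C c)

variable {x : K}

theorem inv_aeval_mem_placeRing (hx : Transcendental k x) {p f : k[X]} (hpf : ¬p ∣ f) :
    (aeval x f)⁻¹ ∈ placeRing x p := by
  have hf : f ≠ 0 := fun h => hpf (h ▸ dvd_zero p)
  refine ⟨1, f, hpf, ?_⟩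
  rw [map_one, inv_mul_cancel₀ fun h => hf (transcendental_iff.mp hx f h)]

theorem inv_aeval_notMem_placeRing (hx : Transcendental k x) {p f : k[X]} (hpf : p ∣ f)
    (hf : f ≠ 0) : (aeval x f)⁻¹ ∉ placeRing x p := by
  rintro ⟨a, b, hpb, he⟩
  have hxf : aeval x f ≠ 0 := fun h => hf (transcendental_iff.mp hx f h)
  have hb : b = f * a := transcendental_iff_injective.mp hx <| by
    rw [map_mul, ← he, mul_inv_cancel_left₀ hxf]
  exact hpb (hb ▸ hpf.mul_right a)

theorem placeRing_ne_univ (hx : Transcendental k x) {p : k[X]} (hp : p ≠ 0) :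
    placeRing x p ≠ Set.univ := fun h =>
  inv_aeval_notMem_placeRing hx dvd_rfl hp (h ▸ Set.mem_univ _)

theorem eq_of_placeRing_eq (hx : Transcendental k x) {p q : k[X]} (hp : p.Monic) (hq : q.Monic)
    (hp' : Irreducible p) (hq' : Irreducible q) (h : placeRing x p = placeRing x q) : p = q := by
  by_contra hne
  have hpq : ¬p ∣ q := fun hpq => hne (eq_of_monic_of_irreducible_of_dvd hp hq hp' hq' hpq)
  have hmem := inv_aeval_mem_placeRing hx hpq
  rw [h] at hmem
  exact inv_aeval_notMem_placeRing hx dvd_rfl hq'.ne_zero hmem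

theorem exists_isCoprime_mul_aeval_eq (hx : Transcendental k x) {z : K} {a b : k[X]}
    (hb : b ≠ 0) (h : z * aeval x b = aeval x a) :
    ∃ a' b' : k[X], IsCoprime a' b' ∧ z * aeval x b' = aeval x a' := by
  classical
  have hg : gcd a b ≠ 0 := gcd_ne_zero_of_right hb
  refine ⟨a / gcd a b, b / gcd a b, isCoprime_div_gcd_div_gcd hb, ?_⟩
  have hxg : aeval x (gcd a b) ≠ 0 := fun h => hg (transcendental_iff.mp hx _ h)
  apply mul_left_cancel₀ hxg
  rw [mul_left_comm, ← map_mul, ← map_mul,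
    EuclideanDomain.mul_div_cancel' hg (gcd_dvd_right a b),
    EuclideanDomain.mul_div_cancel' hg (gcd_dvd_left a b), h]

theorem ValuationSubring.aeval_mem (O : ValuationSubring K)
    (hk : ∀ c : k, algebraMap k K c ∈ O) (hx : x ∈ O) (f : k[X]) : aeval x f ∈ O := by
  induction f using Polynomial.induction_on with
  | C c => simpa using hk c
  | add f g hf hg => rw [map_add]; exact O.add_mem _ _ hf hg
  | monomial n c _ =>
    rw [map_mul, map_pow, aeval_C, aeval_X]
    exact O.mul_mem _ _ (hk c) (O.pow_mem hx _)

theorem ValuationSubring.exists_eq_placeRing (O : ValuationSubring K)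
    (hk : ∀ c : k, algebraMap k K c ∈ O) (hxO : x ∈ O) (hO : O ≠ ⊤)
    (hx : Transcendental k x)
    (hgen : ∀ z : K, ∃ a b : k[X], b ≠ 0 ∧ z * aeval x b = aeval x a) :
    ∃ p : k[X], p.Monic ∧ Irreducible p ∧ (O : Set K) = placeRing x p := by
  set P := (IsLocalRing.maximalIdeal O).comap
    ((aeval x).toRingHom.codRestrict O (O.aeval_mem hk hxO))
  have hmemP (f : k[X]) : f ∈ P ↔ O.valuation (aeval x f) < 1 := O.valuation_lt_one_iff _
  have hnotMemP {f : k[X]} (hf : f ∉ P) : O.valuation (aeval x f) = 1 :=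
    le_antisymm ((O.valuation_le_one_iff _).mpr (O.aeval_mem hk hxO f))
      (not_lt.mp ((hmemP f).not.mp hf))
  have hmemO {z : K} {a b : k[X]} (hb : b ∉ P) (he : z * aeval x b = aeval x a) : z ∈ O := by
    rw [← O.valuation_le_one_iff]
    calc O.valuation z = O.valuation z * O.valuation (aeval x b) := by rw [hnotMemP hb, mul_one]
      _ = O.valuation (aeval x a) := by rw [← map_mul, he]
      _ ≤ 1 := (O.valuation_le_one_iff _).mpr (O.aeval_mem hk hxO a)
  have hP : P ≠ ⊥ := by
    refine fun hP => hO (top_unique fun z _ => ?_)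
    obtain ⟨a, b, hb, he⟩ := hgen z
    exact hmemO (by rwa [hP, Ideal.mem_bot]) he
  obtain ⟨p, hpm, hpi, hPp⟩ := exists_monic_irreducible_span_eq P hP
  have hdvd (f : k[X]) : p ∣ f ↔ f ∈ P := by rw [hPp, Ideal.mem_span_singleton]
  refine ⟨p, hpm, hpi, Set.Subset.antisymm (fun z hz => ?_) ?_⟩
  · obtain ⟨a₀, b₀, hb₀, he₀⟩ := hgen z
    obtain ⟨a, b, hab, he⟩ := exists_isCoprime_mul_aeval_eq hx hb₀ he₀
    refine ⟨a, b, fun hpb => ?_, he⟩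
    have hpa : ¬p ∣ a := fun hpa => hpi.not_isUnit (hab.isUnit_of_dvd' hpa hpb)
    have hva := hnotMemP ((hdvd a).not.mp hpa)
    have hvb := (hmemP b).mp ((hdvd b).mp hpb)
    have hvz := (O.valuation_le_one_iff z).mpr hz
    rw [← he, map_mul] at hva
    exact ((mul_le_of_le_one_left' hvz).trans_lt hvb).ne hva
  · rintro z ⟨a, b, hpb, he⟩
    exact hmemO ((hdvd b).not.mp hpb) he

theorem ValuationSubring.algebraMap_mem_and_ne_top_of_coe_eq_placeRing {O : ValuationSubring K}
    (hx : Transcendental k x) {p : k[X]} (hp : Irreducible p)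
    (hO : (O : Set K) = placeRing x p) : (∀ c : k, algebraMap k K c ∈ O) ∧ O ≠ ⊤ := by
  refine ⟨fun c => ?_, fun hOtop => placeRing_ne_univ hx hp.ne_zero ?_⟩
  · rw [← SetLike.mem_coe, hO]
    exact algebraMap_mem_placeRing x hp.not_isUnit c
  · rw [← hO, hOtop]
    exact Set.eq_univ_of_forall ValuationSubring.mem_top

end PlaceRing

section RatFunc

variable {k : Type*} [Field k]

theorem RatFunc.algebraMap_eq_aeval_X (f : k[X]) :
    algebraMap k[X] (RatFunc k) f = aeval RatFunc.X f := by
  rw [← RatFunc.algebraMap_X, aeval_algebraMap_apply, aeval_X_left_apply]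

theorem RatFunc.transcendental_inv_X : Transcendental k (RatFunc.X : RatFunc k)⁻¹ :=
  fun h => RatFunc.transcendental_X (IsAlgebraic.inv_iff.mp h)

theorem RatFunc.exists_mul_aeval_X_eq (z : RatFunc k) :
    ∃ a b : k[X], b ≠ 0 ∧ z * aeval RatFunc.X b = aeval RatFunc.X a := by
  refine ⟨z.num, z.denom, z.denom_ne_zero, ?_⟩
  rw [← RatFunc.algebraMap_eq_aeval_X, ← RatFunc.algebraMap_eq_aeval_X, eq_comm,
    ← div_eq_iff (RatFunc.algebraMap_ne_zero z.denom_ne_zero), RatFunc.num_div_denom]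

theorem RatFunc.aeval_inv_X_reflect_mul_pow {N : ℕ} {f : k[X]} (hf : f.natDegree ≤ N) :
    aeval (RatFunc.X : RatFunc k)⁻¹ (reflect N f) * RatFunc.X ^ N = aeval RatFunc.X f := by
  have : Invertible (RatFunc.X : RatFunc k) := invertibleOfNonzero RatFunc.X_ne_zero
  simpa only [aeval_def, invOf_eq_inv] using
    eval₂_reflect_mul_pow (algebraMap k (RatFunc k)) RatFunc.X N f hf

theorem RatFunc.exists_mul_aeval_inv_X_eq (z : RatFunc k) :
    ∃ a b : k[X], b ≠ 0 ∧ z * aeval RatFunc.X⁻¹ b = aeval RatFunc.X⁻¹ a := by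
  obtain ⟨a, b, hb, he⟩ := z.exists_mul_aeval_X_eq
  set N := max a.natDegree b.natDegree
  refine ⟨reflect N a, reflect N b, by rwa [Ne, reflect_eq_zero_iff],
    mul_right_cancel₀ (pow_ne_zero N RatFunc.X_ne_zero) ?_⟩
  rw [mul_assoc, RatFunc.aeval_inv_X_reflect_mul_pow (le_max_right _ _),
    RatFunc.aeval_inv_X_reflect_mul_pow (le_max_left _ _), he]

theorem finitePlaceRing_eq_placeRing (p : k[X]) :
    finitePlaceRing k p = placeRing RatFunc.X p := by
  simp only [finitePlaceRing, placeRing, RatFunc.algebraMap_eq_aeval_X]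

theorem infinitePlaceRing_eq_placeRing :
    infinitePlaceRing k = placeRing RatFunc.X⁻¹ (X : k[X]) := by
  simp only [infinitePlaceRing, placeRing, X_dvd_iff]

theorem X_notMem_infinitePlaceRing : RatFunc.X ∉ infinitePlaceRing k := by
  simpa [infinitePlaceRing_eq_placeRing] using
    inv_aeval_notMem_placeRing RatFunc.transcendental_inv_X (dvd_refl (X : k[X])) X_ne_zero

theorem ValuationSubring.exists_eq_finitePlaceRing_or_eq_infinitePlaceRing
    (O : ValuationSubring (RatFunc k)) (hk : ∀ c : k, algebraMap k (RatFunc k) c ∈ O)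
    (hO : O ≠ ⊤) :
    (∃ p : k[X], p.Monic ∧ Irreducible p ∧ (O : Set (RatFunc k)) = finitePlaceRing k p) ∨
      (O : Set (RatFunc k)) = infinitePlaceRing k := by
  by_cases hXO : RatFunc.X ∈ O
  · obtain ⟨p, hpm, hpi, hOp⟩ := O.exists_eq_placeRing hk hXO hO RatFunc.transcendental_X
      RatFunc.exists_mul_aeval_X_eq
    exact .inl ⟨p, hpm, hpi, by rw [hOp, finitePlaceRing_eq_placeRing]⟩
  · obtain ⟨p, hpm, hpi, hOp⟩ := O.exists_eq_placeRing hk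
      ((O.mem_or_inv_mem _).resolve_left hXO) hO RatFunc.transcendental_inv_X
      RatFunc.exists_mul_aeval_inv_X_eq
    have hpX : p ∣ X := by
      by_contra hpX
      have := inv_aeval_mem_placeRing RatFunc.transcendental_inv_X hpX
      rw [aeval_X, inv_inv, ← hOp] at this
      exact hXO this
    rw [eq_of_monic_of_irreducible_of_dvd hpm monic_X hpi irreducible_X hpX] at hOp
    exact .inr (hOp.trans infinitePlaceRing_eq_placeRing.symm)

end RatFunc

/-- The valuation subrings of `K = k(t)` containing `k` and different from `K` are exactly
the localizations `k[t]_(p)` for monic irreducible `p` together with `k[1/t]_(1/t)`; these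
rings are pairwise distinct. -/
theorem stmt_1 (k : Type*) [Field k] :
    (∀ O : ValuationSubring (RatFunc k),
      ((∀ a : k, algebraMap k (RatFunc k) a ∈ O) ∧ O ≠ ⊤) ↔
        ((∃ p : Polynomial k, p.Monic ∧ Irreducible p ∧
            (O : Set (RatFunc k)) = finitePlaceRing k p) ∨
          (O : Set (RatFunc k)) = infinitePlaceRing k)) ∧
    (∀ p q : Polynomial k, p.Monic → Irreducible p → q.Monic → Irreducible q →
      finitePlaceRing k p = finitePlaceRing k q → p = q) ∧
    (∀ p : Polynomial k, p.Monic → Irreducible p →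
      finitePlaceRing k p ≠ infinitePlaceRing k) := by
  refine ⟨fun O =>
      ⟨fun ⟨hk, hO⟩ => O.exists_eq_finitePlaceRing_or_eq_infinitePlaceRing hk hO, ?_⟩,
    fun p q hp hpi hq hqi h => ?_, fun p _ hpi h => ?_⟩
  · rintro (⟨p, -, hpi, hOp⟩ | hOinf)
    · rw [finitePlaceRing_eq_placeRing] at hOp
      exact O.algebraMap_mem_and_ne_top_of_coe_eq_placeRing RatFunc.transcendental_X hpi hOp
    · rw [infinitePlaceRing_eq_placeRing] at hOinf
      exact O.algebraMap_mem_and_ne_top_of_coe_eq_placeRing RatFunc.transcendental_inv_X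
        irreducible_X hOinf
  · simp only [finitePlaceRing_eq_placeRing] at h
    exact eq_of_placeRing_eq RatFunc.transcendental_X hp hq hpi hqi h
  · have hX : RatFunc.X ∈ finitePlaceRing k p := by
      simpa [finitePlaceRing_eq_placeRing] using aeval_mem_placeRing RatFunc.X hpi.not_isUnit X
    exact X_notMem_infinitePlaceRing (h ▸ hX)
end

section
/- Let f ∈ k[t][X] be irreducible of degree ≥ 1 in X, let R = k[t][X]/(f) with fraction field L, let C̄ be the integral closure of R in L, and let B be the integral closure of k[t] in L. Then B ⊆ C̄ (equivalently, every valuation subring of L containing C̄ contains B, i.e., every place of L centered on the affine curve Spec R is a finite place of L over k(t)). Moreover B = C̄ (equivalently, the places centered on Spec R are exactly the finite places) if and only if the leading coefficient of f with respect to X is a nonzero element of k (i.e., f is monic in X up to a unit). -/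
/-- The affine coordinate ring `R = k[t][X]/(f)`. -/
abbrev CoordRing (k : Type*) [Field k] (f : Polynomial (Polynomial k)) :=
  Polynomial (Polynomial k) ⧸ (Ideal.span {f} : Ideal (Polynomial (Polynomial k)))

/-!
Since `k[t] → R → L` is a tower, `B ⊆ C̄` always, and `B = C̄` exactly when `R` is integral
over `k[t]` (`R` embeds in `L`). As `R` is generated by the class `x` of `X`, this means `x` is
integral: a monic polynomial vanishing at `x` is a monic multiple of `f`, which forces the
leading coefficient of `f` to be a unit of `k[t]`; conversely such an `f` becomes monic after
scaling by a unit.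
-/

open Polynomial

theorem Polynomial.algebraIsIntegral_quotient_span_singleton_iff {A : Type*} [CommRing A]
    [IsDomain A] (f : A[X]) :
    Algebra.IsIntegral A (A[X] ⧸ Ideal.span {f}) ↔ IsUnit f.leadingCoeff := by
  constructor
  · intro hint
    obtain ⟨g, hg, hroot⟩ := hint.isIntegral (Ideal.Quotient.mk (Ideal.span {f}) X)
    have hgf : g ∈ Ideal.span {f} := by
      rw [← Ideal.Quotient.eq_zero_iff_mem, ← Ideal.Quotient.mkₐ_eq_mk A,
        ← aeval_X_left_apply g, ← aeval_algHom_apply]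
      exact hroot
    exact hg.isUnit_leadingCoeff_of_dvd (Ideal.mem_span_singleton.mp hgf)
  · rintro ⟨u, hu⟩
    have hmonic : (C (↑u⁻¹ : A) * f).Monic :=
      monic_C_mul_of_mul_leadingCoeff_eq_one (by rw [← hu, Units.inv_mul])
    have hmem : C (↑u⁻¹ : A) * f ∈ Ideal.span {f} :=
      Ideal.mul_mem_left _ _ (Ideal.mem_span_singleton_self f)
    exact ⟨fun x => hmonic.quotient_isIntegral hmem x⟩

theorem integralClosure_coe_eq_iff_algebraIsIntegral {A R L : Type*} [CommRing A] [CommRing R]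
    [CommRing L] [Algebra A R] [Algebra R L] [Algebra A L] [IsScalarTower A R L]
    (hinj : Function.Injective (algebraMap R L)) :
    (integralClosure A L : Set L) = integralClosure R L ↔ Algebra.IsIntegral A R := by
  constructor
  · intro heq
    refine ⟨fun r => ?_⟩
    have hr : algebraMap R L r ∈ (integralClosure A L : Set L) := heq ▸ isIntegral_algebraMap
    exact (isIntegral_algHom_iff (IsScalarTower.toAlgHom A R L) hinj).mp hr
  · intro _
    exact Set.Subset.antisymm (fun x hx => hx.tower_top) (fun x hx => isIntegral_trans x hx)

theorem stmt_18_general {k : Type*} [Field k]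
    (f : Polynomial (Polynomial k))
    (L : Type*) [Field L] [Algebra (CoordRing k f) L] [IsFractionRing (CoordRing k f) L]
    [Algebra (Polynomial k) L] [IsScalarTower (Polynomial k) (CoordRing k f) L] :
    ((integralClosure (Polynomial k) L : Set L) ⊆ (integralClosure (CoordRing k f) L : Set L)) ∧
    ((integralClosure (Polynomial k) L : Set L) = (integralClosure (CoordRing k f) L : Set L) ↔
      ∃ c : k, c ≠ 0 ∧ f.leadingCoeff = Polynomial.C c) := by
  refine ⟨fun x hx => hx.tower_top, ?_⟩
  rw [integralClosure_coe_eq_iff_algebraIsIntegral (IsFractionRing.injective _ L),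
    algebraIsIntegral_quotient_span_singleton_iff, Polynomial.isUnit_iff]
  simp only [isUnit_iff_ne_zero, eq_comm]

/-- The integral closure `B` of `k[t]` in `L` is contained in the integral closure `C̄` of
`R = k[t][X]/(f)` in `L`, with equality if and only if the leading coefficient of `f`
with respect to `X` is a nonzero constant. -/
theorem stmt_18 {k : Type*} [Field k] [PerfectField k]
    (f : Polynomial (Polynomial k)) (hdeg : 1 ≤ f.natDegree) (hirr : Irreducible f)
    [hpr : (Ideal.span {f} : Ideal (Polynomial (Polynomial k))).IsPrime]
    (L : Type*) [Field L] [Algebra (CoordRing k f) L] [IsFractionRing (CoordRing k f) L]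
    [Algebra (Polynomial k) L] [IsScalarTower (Polynomial k) (CoordRing k f) L] :
    ((integralClosure (Polynomial k) L : Set L) ⊆ (integralClosure (CoordRing k f) L : Set L)) ∧
    ((integralClosure (Polynomial k) L : Set L) = (integralClosure (CoordRing k f) L : Set L) ↔
      ∃ c : k, c ≠ 0 ∧ f.leadingCoeff = Polynomial.C c) :=
  stmt_18_general f L
end
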